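/- In S = F_q[X_1,...,X_{s-1}]/⟨X_1^{ρ_1}-1,...,X_{s-1}^{ρ_{s-1}}-1⟩, let p ∈ S be nonzero with lexicographic degree a, and let l ∈ S be nonzero with deg l <_+ (ρ_1,...,ρ_{s-1}) - a componentwise. Then l · p ≠ 0 in S. -/

import Mathlib

noncomputable instance lexLO (s : ℕ) : LinearOrder (Lex (Fin s → ℕ)) :=
  have : WellFoundedLT (Fin s) := Finite.to_wellFoundedLT
  @Pi.Lex.linearOrder (Fin s) (fun _ => ℕ) _ this _

/-- Model of the quotient ring `F_q[X₁,…,X_s]/⟨X_i^{ρ_i}-1⟩` as the group algebra of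
`G_s = ℤ/ρ₁ℤ × ⋯ × ℤ/ρ_sℤ`: elements are `∑_{α ∈ G_s} f_α x^α` with convolution product,
so that `x_i^{ρ_i} = 1`. -/
abbrev QR (F : Type) [Field F] {s : ℕ} (ρ : Fin s → ℕ) : Type :=
  AddMonoidAlgebra F (∀ i : Fin s, ZMod (ρ i))

/-- The degree of a nonzero `f`: the lexicographically largest exponent tuple
`α ∈ ∏_i {0,…,ρ_i-1}` with `f_α ≠ 0`. -/
noncomputable def deg {F : Type} [Field F] {s : ℕ} {ρ : Fin s → ℕ}
    (f : QR F ρ) (hf : f ≠ 0) : Fin s → ℕ :=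
  ofLex (f.coeff.support.sup' (by simpa [Finsupp.support_nonempty_iff] using hf)
    (fun α => toLex fun i => (α i).val))

/-! The leading exponents `a` of `l` and `b` of `p` satisfy `a + b <₊ ρ`, so their sum needs no
reduction modulo `ρ`. Any other pair of support exponents has a lex-smaller unreduced sum, and
reduction only lowers exponents componentwise, so `x^(a+b)` arises exactly once in `l * p` and its
coefficient is the product of the two leading coefficients. -/

section ExponentTuples

variable {s : ℕ} {ρ : Fin s → ℕ}

def expVec (α : ∀ i, ZMod (ρ i)) : Fin s → ℕ := fun i => (α i).val

lemma expVec_injective [∀ i, NeZero (ρ i)] : Function.Injective (expVec (ρ := ρ)) :=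
  fun _ _ h => funext fun i => ZMod.val_injective _ (congrFun h i)

lemma expVec_add_le (α β : ∀ i, ZMod (ρ i)) : expVec (α + β) ≤ expVec α + expVec β :=
  fun i => ZMod.val_add_le (α i) (β i)

lemma expVec_add_of_lt {α β : ∀ i, ZMod (ρ i)} (h : ∀ i, expVec α i + expVec β i < ρ i) :
    expVec (α + β) = expVec α + expVec β :=
  funext fun i => ZMod.val_add_of_lt (h i)

lemma uniqueAdd_of_expVec_add_lt [∀ i, NeZero (ρ i)] {A B : Finset (∀ i, ZMod (ρ i))}
    {α₀ β₀ : ∀ i, ZMod (ρ i)} (hA : ∀ α ∈ A, toLex (expVec α) ≤ toLex (expVec α₀))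
    (hB : ∀ β ∈ B, toLex (expVec β) ≤ toLex (expVec β₀))
    (hlt : ∀ i, expVec α₀ i + expVec β₀ i < ρ i) : UniqueAdd A B α₀ β₀ := by
  intro α β hα hβ hαβ
  have hsum : toLex (expVec α₀ + expVec β₀) ≤ toLex (expVec α + expVec β) :=
    Pi.toLex_monotone <| calc
      expVec α₀ + expVec β₀ = expVec (α + β) := by rw [hαβ, expVec_add_of_lt hlt]
      _ ≤ expVec α + expVec β := expVec_add_le α β
  obtain rfl : α = α₀ := by
    by_contra hne
    have hα_lt : toLex (expVec α) < toLex (expVec α₀) :=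
      (hA α hα).lt_of_ne fun h => hne (expVec_injective (toLex.injective h))
    exact (add_lt_add_of_lt_of_le hα_lt (hB β hβ)).not_ge hsum
  exact ⟨rfl, add_left_cancel hαβ⟩

end ExponentTuples

section Degree

variable {F : Type} [Field F] {s : ℕ} {ρ : Fin s → ℕ}

lemma toLex_expVec_le_deg {f : QR F ρ} (hf : f ≠ 0) {α : ∀ i, ZMod (ρ i)}
    (hα : α ∈ f.coeff.support) : toLex (expVec α) ≤ toLex (deg f hf) :=
  Finset.le_sup' (fun α => toLex (expVec α)) hα

lemma exists_mem_support_expVec_eq_deg {f : QR F ρ} (hf : f ≠ 0) :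
    ∃ α ∈ f.coeff.support, expVec α = deg f hf := by
  obtain ⟨α, hα, hsup⟩ := Finset.exists_mem_eq_sup' _ (fun α => toLex (expVec α))
  exact ⟨α, hα, congrArg ofLex hsup.symm⟩

end Degree

/-- In `S = F_q[X₁,…,X_{s-1}]/⟨X_i^{ρ_i}-1⟩`: if `p ≠ 0` has degree `a` and `l ≠ 0`
satisfies `deg l <₊ ρ - a` componentwise (equivalently `deg l + a <₊ ρ`),
then `l · p ≠ 0`. -/
theorem mul_ne_zero_of_deg_lt {F : Type} [Field F] {t : ℕ} {ρ : Fin t → ℕ} [∀ i, NeZero (ρ i)]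
    (p l : QR F ρ) (hp : p ≠ 0) (hl : l ≠ 0)
    (hlt : ∀ i, deg l hl i + deg p hp i < ρ i) :
    l * p ≠ 0 := by
  obtain ⟨α₀, hα₀, hα₀_deg⟩ := exists_mem_support_expVec_eq_deg hl
  obtain ⟨β₀, hβ₀, hβ₀_deg⟩ := exists_mem_support_expVec_eq_deg hp
  have hunique : UniqueAdd l.coeff.support p.coeff.support α₀ β₀ :=
    uniqueAdd_of_expVec_add_lt (fun _ hα => hα₀_deg ▸ toLex_expVec_le_deg hl hα)
      (fun _ hβ => hβ₀_deg ▸ toLex_expVec_le_deg hp hβ) (hα₀_deg ▸ hβ₀_deg ▸ hlt)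
  have hcoeff : (l * p).coeff (α₀ + β₀) ≠ 0 := by
    rw [AddMonoidAlgebra.coeff_mul_add_of_uniqueAdd hunique]
    exact mul_ne_zero (Finsupp.mem_support_iff.mp hα₀) (Finsupp.mem_support_iff.mp hβ₀)
  exact fun hlp => hcoeff (by rw [hlp]; rfl)
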